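/- arXiv:1807.08827 — 4 statements merged into one kernel-verified Lean document; each statement's English description precedes it below -/
import Mathlib

section
/- Let X be a compact, semi-locally simply connected length space of diameter d, and let p ∈ X. For every ε > 0, the fundamental group π₁(X, p) is generated by homotopy classes that contain loops of length less than 2(d + ε). -/
open Set

/-- A length space. -/
def IsLengthSpace (X : Type*) [PseudoEMetricSpace X] : Prop :=
  ∀ x y : X, edist x y =
    ⨅ (γ : ℝ → X) (_ : ContinuousOn γ (Icc 0 1) ∧ γ 0 = x ∧ γ 1 = y),
      eVariationOn γ (Icc 0 1)

/-- Semi-locally simply connected: every point has a neighbourhood in which every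
loop is null-homotopic in `X`. -/
def IsSemiLocallySimplyConnected (X : Type*) [TopologicalSpace X] : Prop :=
  ∀ x : X, ∃ U ∈ nhds x, ∀ γ : Path x x, range γ ⊆ U → Path.Homotopic γ (Path.refl x)

/-- The length of a path, as the variation of its extension to `ℝ`. -/
noncomputable def pathLength {X : Type*} [PseudoEMetricSpace X] {x y : X}
    (γ : Path x y) : ENNReal :=
  eVariationOn γ.extend (Icc 0 1)

/-!
Fix short paths `σ x` from `p` to every point `x`, of length `< d + ε/2`. Cutting a loop `γ`
into pieces `γᵢ` so fine that each lies in a small ball, `γ` is homotopic to the product of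
the "lassos" `σ xᵢ · γᵢ · (σ xᵢ₊₁)⁻¹`. By compactness and semi-local simple connectedness there
is a uniform `η` such that paths with the same endpoints inside a ball of radius `η` are
homotopic, so each `γᵢ` may be replaced by a path of length `< ε/2`, making every lasso shorter
than `2(d + ε)`.
-/

open scoped ENNReal
open Path.Homotopic.Quotient

section PathLength

variable {X : Type*} [PseudoEMetricSpace X] {x y z : X}

theorem pathLength_symm (γ : Path x y) : pathLength γ.symm = pathLength γ := by
  have hanti : AntitoneOn (fun t : ℝ => 1 - t) (Icc 0 1) := fun a _ b _ hab => by
    simp only; linarith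
  rw [pathLength, Path.extend_symm]
  change eVariationOn (γ.extend ∘ fun t => 1 - t) _ = _
  rw [eVariationOn.comp_eq_of_antitoneOn _ _ hanti, image_const_sub_Icc, sub_zero, sub_self,
    pathLength]

theorem pathLength_trans (γ₁ : Path x y) (γ₂ : Path y z) :
    pathLength (γ₁.trans γ₂) = pathLength γ₁ + pathLength γ₂ := by
  have hsplit := eVariationOn.Icc_add_Icc (γ₁.trans γ₂).extend (s := univ)
    (by norm_num : (0 : ℝ) ≤ 1 / 2) (by norm_num : (1 / 2 : ℝ) ≤ 1) (mem_univ _)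
  simp only [univ_inter] at hsplit
  -- Both reparametrizations are written as affine maps `2 * t + b` to match `image_affine_Icc'`.
  have h₁ : EqOn (γ₁.trans γ₂).extend (γ₁.extend ∘ (2 * · + 0)) (Icc 0 (1 / 2)) :=
    fun t ht => by simp [Path.extend_trans_of_le_half _ _ ht.2]
  have h₂ : EqOn (γ₁.trans γ₂).extend (γ₂.extend ∘ (2 * · + -1)) (Icc (1 / 2) 1) :=
    fun t ht => by simp [Path.extend_trans_of_half_le _ _ ht.1, sub_eq_add_neg]
  have hmono (b : ℝ) : MonotoneOn (2 * · + b) univ := fun s _ t _ hst => by simp only; linarith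
  rw [pathLength, pathLength, pathLength, ← hsplit, eVariationOn.eq_of_eqOn h₁,
    eVariationOn.eq_of_eqOn h₂,
    eVariationOn.comp_eq_of_monotoneOn _ _ ((hmono 0).mono (subset_univ _)),
    eVariationOn.comp_eq_of_monotoneOn _ _ ((hmono (-1)).mono (subset_univ _)),
    image_affine_Icc' two_pos, image_affine_Icc' two_pos]
  norm_num

theorem IsLengthSpace.exists_path_pathLength_lt (hX : IsLengthSpace X) {a : ℝ≥0∞}
    (h : edist x y < a) :
    ∃ γ : Path x y, pathLength γ < a ∧ range γ ⊆ Metric.eball x a := by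
  rw [hX x y] at h
  simp only [iInf_lt_iff] at h
  obtain ⟨f, ⟨hf, rfl, rfl⟩, hlt⟩ := h
  let γ : Path (f 0) (f 1) :=
    ⟨⟨fun t => f t, hf.comp_continuous continuous_subtype_val Subtype.prop⟩, rfl, rfl⟩
  have hγ : EqOn γ.extend f (Icc 0 1) := fun t ht => by rw [Path.extend_apply _ ht]; rfl
  refine ⟨γ, by rwa [pathLength, eVariationOn.eq_of_eqOn hγ], ?_⟩
  rintro _ ⟨t, rfl⟩
  rw [Metric.mem_eball']
  exact (eVariationOn.edist_le f (by norm_num) t.2).trans_lt hlt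

end PathLength

theorem IsLengthSpace.exists_path_pathLength_lt_diam_add {X : Type*} [PseudoMetricSpace X]
    [CompactSpace X] (hX : IsLengthSpace X) (x y : X) {δ : ℝ} (hδ : 0 < δ) :
    ∃ γ : Path x y, pathLength γ < .ofReal (Metric.diam (univ : Set X) + δ) := by
  have hxy : dist x y < Metric.diam (univ : Set X) + δ := (Metric.dist_le_diam_of_mem
    Metric.isBounded_of_compactSpace (mem_univ x) (mem_univ y)).trans_lt (by linarith)
  obtain ⟨γ, hγ, -⟩ := hX.exists_path_pathLength_lt (edist_lt_ofReal.mpr hxy)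
  exact ⟨γ, hγ⟩

theorem Path.Homotopic.Quotient.ind_of_trans_of_ball {X : Type*} [PseudoMetricSpace X]
    (P : ∀ {x y : X}, Path.Homotopic.Quotient x y → Prop) {ρ : ℝ} (hρ : 0 < ρ)
    (hball : ∀ {x y : X} (α : Path x y), range α ⊆ Metric.ball x ρ → P (mk α))
    (htrans : ∀ {x y z : X} (a : Path.Homotopic.Quotient x y) (b : Path.Homotopic.Quotient y z),
      P a → P b → P (a.trans b))
    {x y : X} (γ : Path x y) : P (mk γ) := by
  obtain ⟨t, ht0, htmono, ⟨N, htN⟩, hsmall⟩ := exists_monotone_Icc_subset_open_cover_unitInterval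
    (c := fun z : X => γ ⁻¹' Metric.ball z (ρ / 2))
    (fun z => Metric.isOpen_ball.preimage γ.continuous)
    (fun s _ => mem_iUnion.mpr ⟨γ s, Metric.mem_ball_self (half_pos hρ)⟩)
  have hpiece (n : ℕ) : P (mk (γ.subpath (t n) (t (n + 1)))) := by
    obtain ⟨z, hz⟩ := hsmall n
    refine hball _ ?_
    rw [γ.range_subpath_of_le _ _ (htmono n.le_succ)]
    rintro _ ⟨s, hs, rfl⟩
    have h₁ := hz ⟨le_rfl, htmono n.le_succ⟩
    have h₂ := hz hs
    simp only [mem_preimage, Metric.mem_ball] at h₁ h₂ ⊢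
    linarith [dist_triangle_right (γ s) (γ (t n)) z]
  have hinit (n : ℕ) : P (mk (γ.subpath (t 0) (t n))) := by
    induction n with
    | zero => simpa using hball (Path.refl (γ (t 0))) (by simp [hρ])
    | succ n ih =>
      rw [← eq.mpr ⟨Path.Homotopy.subpathTransSubpath γ _ (t n) _⟩]
      exact htrans _ _ ih (hpiece n)
  have h := hinit N
  rw [ht0, htN N le_rfl, Path.subpath_zero_one, mk_cast] at h
  convert h using 2
  exacts [γ.source.symm, γ.target.symm, (cast_heq _ _).symm]

theorem IsSemiLocallySimplyConnected.exists_pos_mk_eq_of_range_subset_ball {X : Type*}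
    [PseudoMetricSpace X] [CompactSpace X] (hsl : IsSemiLocallySimplyConnected X)
    (hX : IsLengthSpace X) :
    ∃ η > 0, ∀ {x y : X} (α β : Path x y), range α ⊆ Metric.ball x η →
      range β ⊆ Metric.ball x η → mk α = mk β := by
  have hr (z : X) : ∃ r > 0, ∀ γ : Path z z, range γ ⊆ Metric.ball z r → mk γ = refl z := by
    obtain ⟨U, hU, hnull⟩ := hsl z
    obtain ⟨r, hr, hrU⟩ := Metric.mem_nhds_iff.mp hU
    exact ⟨r, hr, fun γ hγ => eq.mpr (hnull γ (hγ.trans hrU))⟩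
  choose r hr hnull using hr
  obtain ⟨η, hη, hcover⟩ := lebesgue_number_lemma_of_metric isCompact_univ
    (fun z => Metric.isOpen_ball (x := z) (ε := r z))
    (fun z _ => mem_iUnion.mpr ⟨z, Metric.mem_ball_self (hr z)⟩)
  refine ⟨η, hη, fun {x y} α β hα hβ => ?_⟩
  obtain ⟨z, hz⟩ := hcover x (mem_univ x)
  -- Conjugating by a path from the centre `z` of the ball turns `α β⁻¹` into a loop at `z`.
  obtain ⟨c, -, hc⟩ := hX.exists_path_pathLength_lt (x := z) (y := x) (a := .ofReal (r z))
    (by rw [edist_lt_ofReal, dist_comm]; exact hz (Metric.mem_ball_self hη))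
  rw [Metric.eball_ofReal] at hc
  have h := hnull z (c.trans ((α.trans β.symm).trans c.symm)) (by
    simp only [Path.trans_range, Path.symm_range]
    exact union_subset hc (union_subset (union_subset (hα.trans hz) (hβ.trans hz)) hc))
  have := congrArg (fun q => (mk c).symm.trans (q.trans ((mk c).trans (mk β)))) h
  grind

theorem IsSemiLocallySimplyConnected.exists_pos_forall_exists_pathLength_lt {X : Type*}
    [PseudoMetricSpace X] [CompactSpace X] (hsl : IsSemiLocallySimplyConnected X)
    (hX : IsLengthSpace X) :
    ∃ η > 0, ∀ {x y : X} {ρ : ℝ} (α : Path x y), ρ ≤ η → range α ⊆ Metric.ball x ρ →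
      ∃ τ : Path x y, pathLength τ < .ofReal ρ ∧ mk α = mk τ := by
  obtain ⟨η, hη, hhom⟩ := hsl.exists_pos_mk_eq_of_range_subset_ball hX
  refine ⟨η, hη, fun {x y ρ} α hρη hα => ?_⟩
  obtain ⟨τ, hτ, hτx⟩ := hX.exists_path_pathLength_lt (x := x) (y := y) (a := .ofReal ρ)
    (edist_lt_ofReal.mpr (Metric.mem_ball'.mp (hα ⟨1, α.target⟩)))
  rw [Metric.eball_ofReal] at hτx
  exact ⟨τ, hτ, hhom α τ (hα.trans (Metric.ball_subset_ball hρη))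
    (hτx.trans (Metric.ball_subset_ball hρη))⟩

theorem FundamentalGroup.eq_top_of_lasso_mem {X : Type*} [PseudoMetricSpace X] {p : X}
    (H : Subgroup (FundamentalGroup X p)) (σ : ∀ x, Path p x) {ρ : ℝ} (hρ : 0 < ρ)
    (hσ : fromPath (mk (σ p)) ∈ H)
    (hball : ∀ {x y : X} (α : Path x y), range α ⊆ Metric.ball x ρ →
      fromPath (mk ((σ x).trans (α.trans (σ y).symm))) ∈ H) : H = ⊤ := by
  rw [Subgroup.eq_top_iff']
  intro g
  induction g using Path.Homotopic.Quotient.ind with | mk γ => ?_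
  have hlasso : fromPath ((mk (σ p)).trans ((mk γ).trans (mk (σ p)).symm)) ∈ H := by
    refine ind_of_trans_of_ball
      (fun {x y} f => fromPath ((mk (σ x)).trans (f.trans (mk (σ y)).symm)) ∈ H) hρ hball
      (fun {x y z} a b ha hb => ?_) γ
    convert H.mul_mem hb ha using 1
    simp only [mul_def]
    grind
  -- `σ p` is itself a loop, and conjugating the lasso of `γ` by it gives back `γ`.
  convert H.mul_mem (H.mul_mem hσ hlasso) (H.inv_mem hσ) using 1
  simp only [mul_def, inv_def]
  grind

/-- The fundamental group of a compact, semi-locally simply connected length space of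
diameter `d` is generated by homotopy classes containing loops of length
less than `2(d + ε)`, for every `ε > 0`. -/
theorem fundamentalGroup_generated_by_short_loops {X : Type*} [MetricSpace X]
    [CompactSpace X] (hX : IsLengthSpace X) (hsl : IsSemiLocallySimplyConnected X)
    (p : X) (ε : ℝ) (hε : 0 < ε) :
    Subgroup.closure {g : FundamentalGroup X p | ∃ γ : Path p p,
        FundamentalGroup.toPath g = ⟦γ⟧ ∧
        pathLength γ < ENNReal.ofReal (2 * (Metric.diam (univ : Set X) + ε))} = ⊤ := by
  set d := Metric.diam (univ : Set X)
  have hd : 0 ≤ d := Metric.diam_nonneg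
  obtain ⟨η, hη, hshort⟩ := hsl.exists_pos_forall_exists_pathLength_lt hX
  set ρ := min η (ε / 2)
  choose σ hσ using fun x => hX.exists_path_pathLength_lt_diam_add p x (half_pos hε)
  refine FundamentalGroup.eq_top_of_lasso_mem _ σ (lt_min hη (half_pos hε))
    (Subgroup.subset_closure ⟨σ p, rfl, (hσ p).trans_le (ENNReal.ofReal_le_ofReal (by linarith))⟩)
    fun {x y} α hα => ?_
  obtain ⟨τ, hτ, hατ⟩ := hshort α (min_le_left _ _) hα
  have hlasso : mk ((σ x).trans (α.trans (σ y).symm)) = mk ((σ x).trans (τ.trans (σ y).symm)) := by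
    simp only [mk_trans, hατ]
  refine hlasso ▸ Subgroup.subset_closure ⟨_, rfl, ?_⟩
  calc pathLength ((σ x).trans (τ.trans (σ y).symm))
      = pathLength (σ x) + (pathLength τ + pathLength (σ y)) := by
        rw [pathLength_trans, pathLength_trans, pathLength_symm]
    _ < .ofReal (d + ε / 2) + (.ofReal ρ + .ofReal (d + ε / 2)) := by
        gcongr <;> [exact hσ x; exact hσ y]
    _ = .ofReal (d + ε / 2 + (ρ + (d + ε / 2))) := by
        rw [← ENNReal.ofReal_add, ← ENNReal.ofReal_add] <;> positivity
    _ ≤ .ofReal (2 * (d + ε)) := ENNReal.ofReal_le_ofReal (by linarith [min_le_right η (ε / 2)])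
end

section
/- Let Y be a simply connected 2-dimensional simplicial complex with 1-skeleton Z, let e, h ∈ Z with d(e,h) = m, fix a geodesic e = g₀, …, g_m = h, and for 0 < i < m let T_i be the connected component of g_i in the subgraph of Z induced by the sphere S_i = {g : d(g,e) = i}. Then removing the vertices of T_i disconnects e from h in Z; that is, every path in Z from e to h meets T_i. -/
open SimpleGraph

/-- A 2-dimensional simplicial complex, given combinatorially: a graph together with
a set of triangular faces, all of whose edges belong to the graph. -/
structure TwoComplex (V : Type*) where
  graph : SimpleGraph V
  faces : Set (Finset V)
  card_eq : ∀ f ∈ faces, f.card = 3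
  edges_mem : ∀ f ∈ faces, ∀ a ∈ f, ∀ b ∈ f, a ≠ b → graph.Adj a b

/-- Combinatorial homotopy of walks in a 2-complex: generated by cancelling
backtracks and by exchanging two sides of a triangular face for the third. -/
inductive TwoComplex.Homotopic {V : Type*} [DecidableEq V] (C : TwoComplex V) :
    ∀ {u w : V}, C.graph.Walk u w → C.graph.Walk u w → Prop
  | refl {u w} (p : C.graph.Walk u w) : TwoComplex.Homotopic C p p
  | symm {u w} {p q : C.graph.Walk u w} :
      TwoComplex.Homotopic C p q → TwoComplex.Homotopic C q p
  | trans {u w} {p q r : C.graph.Walk u w} :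
      TwoComplex.Homotopic C p q → TwoComplex.Homotopic C q r →
      TwoComplex.Homotopic C p r
  | backtrack {u v x w} (p : C.graph.Walk u v) (h : C.graph.Adj v x)
      (q : C.graph.Walk v w) :
      TwoComplex.Homotopic C (p.append ((SimpleGraph.Walk.cons h
        (SimpleGraph.Walk.cons h.symm q)))) (p.append q)
  | triangle {u a b c w} (hf : ({a, b, c} : Finset V) ∈ C.faces)
      (hab : C.graph.Adj a b) (hac : C.graph.Adj a c) (hcb : C.graph.Adj c b)
      (p : C.graph.Walk u a) (q : C.graph.Walk b w) :
      TwoComplex.Homotopic C (p.append (SimpleGraph.Walk.cons hab q))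
        (p.append (SimpleGraph.Walk.cons hac (SimpleGraph.Walk.cons hcb q)))

/-- A 2-complex is simply connected if every closed walk is null-homotopic. -/
def TwoComplex.SimplyConnected {V : Type*} [DecidableEq V] (C : TwoComplex V) : Prop :=
  ∀ (v : V) (p : C.graph.Walk v v), TwoComplex.Homotopic C p SimpleGraph.Walk.nil

/-- The Cayley graph of a group with respect to a set of generators. -/
def cayleyGraph (G : Type*) [Group G] (S : Set G) : SimpleGraph G where
  Adj g h := g ≠ h ∧ (g⁻¹ * h ∈ S ∨ h⁻¹ * g ∈ S)
  symm := ⟨fun g h ⟨hne, hor⟩ => ⟨hne.symm, hor.symm⟩⟩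
  loopless := ⟨fun g ⟨hne, _⟩ => hne rfl⟩

/-!
`crossingCochain T S_{i+1}` counts with sign the steps of a walk from `T` into the sphere
`S_{i+1}`; it plays the role of the map `Y → S¹`. It is a cocycle: if a triangle has one vertex
`t ∈ T` and two vertices off `T`, these two are off `S_i` (as `T` is a component of `S_i`) and at
distance at most one from `t` and from each other, so both lie in `S_{i+1}` or both in `S_{i-1}`.
Its sum along walks is therefore invariant under homotopy, so in a simply connected complex all
walks from `e` to `h` have the same sum. The geodesic steps from `T` into `S_{i+1}` exactly once,
giving `1`, while a walk avoiding `T` gives `0`.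
-/

namespace SimpleGraph.Walk

variable {V : Type*} {G : SimpleGraph V}

section dartSum

variable {A : Type*} [AddCommMonoid A] (w : V → V → A)

def dartSum {u v : V} (p : G.Walk u v) : A :=
  (p.darts.map fun d => w d.fst d.snd).sum

@[simp]
lemma dartSum_nil (u : V) : (nil : G.Walk u u).dartSum w = 0 := rfl

@[simp]
lemma dartSum_cons {u x v : V} (h : G.Adj u x) (p : G.Walk x v) :
    (cons h p).dartSum w = w u x + p.dartSum w := rfl

@[simp]
lemma dartSum_append {u v x : V} (p : G.Walk u v) (q : G.Walk v x) :
    (p.append q).dartSum w = p.dartSum w + q.dartSum w := by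
  simp [dartSum, darts_append]

lemma dartSum_eq_sum_range {u v : V} (p : G.Walk u v) :
    p.dartSum w = ∑ k ∈ Finset.range p.length, w (p.getVert k) (p.getVert (k + 1)) := by
  induction p with
  | nil => simp
  | cons h p ih =>
    rw [length_cons, Finset.sum_range_succ', add_comm]
    simp [ih]

end dartSum

lemma dartSum_reverse {A : Type*} [AddCommGroup A] {w : V → V → A}
    (hw : ∀ ⦃u v⦄, G.Adj u v → w v u = -w u v) {u v : V}
    (p : G.Walk u v) : p.reverse.dartSum w = -p.dartSum w := by
  induction p with
  | nil => simp
  | cons h p ih => simp [ih, hw h, add_comm]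

end SimpleGraph.Walk

namespace TwoComplex

variable {V : Type*} [DecidableEq V] {A : Type*} [AddCommGroup A]

structure IsCocycle (C : TwoComplex V) (w : V → V → A) : Prop where
  antisymm : ∀ ⦃u v⦄, C.graph.Adj u v → w v u = -w u v
  face : ∀ ⦃a b c⦄, ({a, b, c} : Finset V) ∈ C.faces →
    C.graph.Adj a b → C.graph.Adj a c → C.graph.Adj c b → w a b = w a c + w c b

variable {C : TwoComplex V} {w : V → V → A}

lemma Homotopic.dartSum_eq (hw : C.IsCocycle w) {u v : V} {p q : C.graph.Walk u v}
    (hpq : C.Homotopic p q) : p.dartSum w = q.dartSum w := by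
  induction hpq with
  | refl => rfl
  | symm _ ih => exact ih.symm
  | trans _ _ ih₁ ih₂ => exact ih₁.trans ih₂
  | backtrack p h q => simp [hw.antisymm h]
  | triangle hf hab hac hcb p q => simp [hw.face hf hab hac hcb, add_assoc]

lemma SimplyConnected.dartSum_eq (hsc : C.SimplyConnected) (hw : C.IsCocycle w) {u v : V}
    (p q : C.graph.Walk u v) : p.dartSum w = q.dartSum w := by
  have hloop := (hsc u (p.append q.reverse)).dartSum_eq hw
  rw [Walk.dartSum_append, Walk.dartSum_reverse hw.antisymm, Walk.dartSum_nil, ← sub_eq_add_neg]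
    at hloop
  exact sub_eq_zero.mp hloop

end TwoComplex

noncomputable def crossingCochain {V : Type*} (T U : Set V) (u v : V) : ℤ :=
  T.indicator 1 u * U.indicator 1 v - U.indicator 1 u * T.indicator 1 v

lemma TwoComplex.isCocycle_crossingCochain {V : Type*} [DecidableEq V] (C : TwoComplex V)
    {T U : Set V} (hTU : Disjoint T U)
    (hlink : ∀ ⦃t x y⦄, t ∈ T → C.graph.Adj t x → C.graph.Adj t y → C.graph.Adj x y →
      x ∉ T → y ∉ T → (x ∈ U ↔ y ∈ U)) :
    C.IsCocycle (crossingCochain T U) := by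
  refine ⟨fun u v _ => by simp only [crossingCochain]; ring, fun a b c _ hab hac hcb => ?_⟩
  have hU : ∀ x ∈ T, x ∉ U := fun x hx => hTU.notMem_of_mem_left hx
  have hsameU : ∀ ⦃t x y⦄, t ∈ T → C.graph.Adj t x → C.graph.Adj t y → C.graph.Adj x y →
      x ∉ T → y ∉ T → U.indicator (1 : V → ℤ) x = U.indicator 1 y :=
    fun t x y ht htx hty hxy hx hy =>
      Set.indicator_eq_indicator (hlink ht htx hty hxy hx hy) rfl
  unfold crossingCochain
  by_cases hA : a ∈ T <;> by_cases hB : b ∈ T <;> by_cases hC : c ∈ T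
  · simp [hA, hB, hC, hU a hA, hU b hB, hU c hC]
  · simp [hA, hB, hC, hU a hA, hU b hB]
  · simp [hA, hB, hC, hU a hA, hU c hC]
  · simp [hA, hB, hC, hU a hA, hsameU hA hab hac hcb.symm hB hC]
  · simp [hA, hB, hC, hU b hB, hU c hC]
  · simp [hA, hB, hC, hU b hB, hsameU hB hab.symm hcb.symm hac hA hC]
  · simp [hA, hB, hC, hU c hC, hsameU hC hac.symm hcb hab hA hB]
  · simp [hA, hB, hC]

namespace SimpleGraph

variable {V : Type*} {G : SimpleGraph V}

lemma dist_eq_add_one_iff_of_triangle {e t x y : V} {i : ℕ} (ht : G.dist e t = i)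
    (htx : G.Adj t x) (hty : G.Adj t y) (hxy : G.Adj x y)
    (hx : G.dist e x ≠ i) (hy : G.dist e y ≠ i) :
    G.dist e x = i + 1 ↔ G.dist e y = i + 1 := by
  have := htx.diff_dist_adj (u := e)
  have := hty.diff_dist_adj (u := e)
  have := hxy.diff_dist_adj (u := e)
  omega

namespace Walk

lemma dartSum_crossingCochain_eq_zero {T U : Set V} {u v : V} (p : G.Walk u v)
    (hp : ∀ x ∈ p.support, x ∉ T) : p.dartSum (crossingCochain T U) = 0 := by
  refine List.sum_eq_zero fun a ha => ?_
  obtain ⟨d, hd, rfl⟩ := List.mem_map.1 ha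
  simp [crossingCochain, hp _ (p.dart_fst_mem_support_of_mem_darts hd),
    hp _ (p.dart_snd_mem_support_of_mem_darts hd)]

lemma dartSum_crossingCochain_sphere_of_dist_getVert {e v : V} (p : G.Walk e v)
    (hp : ∀ k ≤ p.length, G.dist e (p.getVert k) = k) {T : Set V} {i : ℕ}
    (hT : ∀ t ∈ T, G.dist e t = i) (hi : i < p.length) (hpi : p.getVert i ∈ T) :
    p.dartSum (crossingCochain T {x | G.dist e x = i + 1}) = 1 := by
  have hnotT : ∀ k ≤ p.length, k ≠ i → p.getVert k ∉ T :=
    fun k hk hki hkT => hki ((hp k hk).symm.trans (hT _ hkT))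
  rw [dartSum_eq_sum_range, Finset.sum_eq_single_of_mem i (Finset.mem_range.2 hi)]
  · simp [crossingCochain, hpi, hp i hi.le, hp (i + 1) hi]
  · intro k hkr hki
    have hk : k < p.length := Finset.mem_range.1 hkr
    by_cases hki' : k + 1 = i
    · simp [crossingCochain, hnotT k hk.le hki, hp k hk.le]
      omega
    · simp [crossingCochain, hnotT k hk.le hki, hnotT (k + 1) hk hki']

end Walk

end SimpleGraph

lemma TwoComplex.isCocycle_crossingCochain_sphere {V : Type*} [DecidableEq V]
    (C : TwoComplex V) {e : V} {i : ℕ} {T : Set V} (hT : ∀ t ∈ T, C.graph.dist e t = i)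
    (hTclosed : ∀ ⦃t x⦄, t ∈ T → C.graph.Adj t x → C.graph.dist e x = i → x ∈ T) :
    C.IsCocycle (crossingCochain T {x | C.graph.dist e x = i + 1}) := by
  refine C.isCocycle_crossingCochain
    (Set.disjoint_left.2 fun x hxT (hxU : C.graph.dist e x = i + 1) => ?_) ?_
  · have := hT x hxT
    omega
  · intro t x y ht htx hty hxy hxT hyT
    exact dist_eq_add_one_iff_of_triangle (hT t ht) htx hty hxy
      (fun hx => hxT (hTclosed ht htx hx)) (fun hy => hyT (hTclosed ht hty hy))

/-- In a simply connected 2-complex, for `0 < i < m`, the component `T i` of the `i`-th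
vertex of a geodesic from `e` to `h` inside the sphere `S i` separates `e` from `h`:
every walk from `e` to `h` meets `T i`. -/
theorem walk_meets_sphere_component {V : Type*} [DecidableEq V]
    (C : TwoComplex V) (hsc : C.SimplyConnected)
    (e h : V) (m : ℕ)
    (p : C.graph.Walk e h) (hgeod : p.length = m)
    (hvert : ∀ k ≤ m, C.graph.dist e (p.getVert k) = k)
    (i : ℕ) (him : i < m)
    (S : Set V) (hS : S = {g : V | C.graph.dist e g = i})
    (T : Set V)
    (hT : T = {g : V | ∃ hg : g ∈ S,
      (C.graph.induce S).Reachable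
        ⟨p.getVert i, by rw [hS]; exact hvert i him.le⟩ ⟨g, hg⟩}) :
    ∀ q : C.graph.Walk e h, ∃ x ∈ q.support, x ∈ T := by
  intro q
  by_contra! hq
  subst hS hgeod
  have hTsphere : ∀ t ∈ T, C.graph.dist e t = i := by
    rw [hT]
    exact fun t ⟨ht, _⟩ => ht
  have hTclosed : ∀ ⦃t x⦄, t ∈ T → C.graph.Adj t x → C.graph.dist e x = i → x ∈ T := by
    rw [hT]
    exact fun t x ⟨htS, hreach⟩ htx hx =>
      ⟨hx, hreach.trans (Adj.reachable (by simpa using htx :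
        (C.graph.induce _).Adj ⟨t, htS⟩ ⟨x, hx⟩))⟩
  have hpT : p.getVert i ∈ T := hT ▸ ⟨hvert i him.le, Reachable.refl _⟩
  have hsum := hsc.dartSum_eq (C.isCocycle_crossingCochain_sphere hTsphere hTclosed) p q
  rw [p.dartSum_crossingCochain_sphere_of_dist_getVert hvert hTsphere him hpT,
    q.dartSum_crossingCochain_eq_zero hq] at hsum
  exact one_ne_zero hsum
end

section
/- Let X be a compact, semi-locally simply connected length space with universal cover X̃ (with lifted metric), p ∈ X with fiber {p₁,…,p_n}, ε > 0, and U_i = B(p_i, d+ε) where d = diam(X). Then the nerve N of the cover {U_i} is connected; indeed for any i, j there is a sequence p_{i=i₀}, p_{i₁}, …, p_{i_m = j} in the fiber with d(p_{i_{k−1}}, p_{i_k}) < 2(d + ε) for all k, so consecutive vertices span edges of N. -/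
open Set

/-- The covering map preserves lengths of curves. -/
def IsLiftedMetric {X Xt : Type*} [PseudoEMetricSpace X] [PseudoEMetricSpace Xt]
    (ρ : Xt → X) : Prop :=
  ∀ γ : ℝ → Xt, ContinuousOn γ (Icc 0 1) →
    eVariationOn (ρ ∘ γ) (Icc 0 1) = eVariationOn γ (Icc 0 1)

/-- The 1-skeleton of the nerve of a cover `U`: vertices are indices, with an edge
between `i ≠ j` whenever `U i ∩ U j ≠ ∅`. -/
def nerveGraph {ι Y : Type*} (U : ι → Set Y) : SimpleGraph ι where
  Adj i j := i ≠ j ∧ (U i ∩ U j).Nonempty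
  symm := ⟨fun i j ⟨hne, x, hx⟩ => ⟨hne.symm, x, hx.2, hx.1⟩⟩
  loopless := ⟨fun i ⟨hne, _⟩ => hne rfl⟩

/-! Every point `x` of `X̃` lies within `d + ε` of the fiber: join `ρ x` to `p` by a curve
of length `< d + ε` and lift it from `x`; the lift has the same length and ends in the fiber.
So the open balls `B(pᵢ, d + ε)` cover the connected space `X̃`, and an open cover of a connected
space by nonempty sets has a connected nerve. Consecutive vertices of a walk in the nerve have
intersecting balls, hence centres at distance `< 2(d + ε)`. -/

theorem IsCoveringMap.exists_lift_of_continuousOn {E X : Type*} [TopologicalSpace E]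
    [TopologicalSpace X] {ρ : E → X} (hρ : IsCoveringMap ρ) {γ : ℝ → X}
    (hγ : ContinuousOn γ (Icc 0 1)) {e : E} (he : ρ e = γ 0) :
    ∃ Γ : ℝ → E, Continuous Γ ∧ Γ 0 = e ∧ EqOn (ρ ∘ Γ) γ (Icc 0 1) := by
  let γI : C(unitInterval, X) := ⟨fun t => γ t, hγ.domRestrict⟩
  obtain ⟨Γ, hΓ, hΓ0⟩ := hρ.exists_path_lifts γI e he.symm
  refine ⟨IccExtend zero_le_one Γ, Γ.continuous.Icc_extend', ?_, fun t ht => ?_⟩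
  · simpa using hΓ0
  · rw [Function.comp_apply, IccExtend_of_mem _ _ ht]
    exact congr_fun hΓ ⟨t, ht⟩

theorem IsCoveringMap.exists_lift_edist_lt {E X : Type*} [PseudoEMetricSpace E]
    [PseudoEMetricSpace X] {ρ : E → X} (hρ : IsCoveringMap ρ) (hlift : IsLiftedMetric ρ)
    (hX : IsLengthSpace X) (hE : IsLengthSpace E) (x : E) {y : X} {r : ENNReal}
    (h : edist (ρ x) y < r) : ∃ x', ρ x' = y ∧ edist x x' < r := by
  rw [hX, iInf_lt_iff] at h
  obtain ⟨γ, h⟩ := h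
  rw [iInf_lt_iff] at h
  obtain ⟨⟨hγ, hγ0, hγ1⟩, hlen⟩ := h
  obtain ⟨Γ, hΓ, hΓ0, hΓγ⟩ := hρ.exists_lift_of_continuousOn hγ hγ0.symm
  refine ⟨Γ 1, (hΓγ ⟨zero_le_one, le_rfl⟩).trans hγ1, ?_⟩
  calc edist x (Γ 1) ≤ eVariationOn Γ (Icc 0 1) := by
        rw [hE]; exact iInf₂_le Γ ⟨hΓ.continuousOn, hΓ0, rfl⟩
    _ = eVariationOn γ (Icc 0 1) := by
        rw [← hlift Γ hΓ.continuousOn]; exact eVariationOn.eq_of_eqOn hΓγ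
    _ < r := hlen

theorem nerveGraph_reachable_of_inter_nonempty {ι Y : Type*} {U : ι → Set Y} {i j : ι}
    (h : (U i ∩ U j).Nonempty) : (nerveGraph U).Reachable i j := by
  by_cases hij : i = j
  · exact hij ▸ .refl i
  · exact SimpleGraph.Adj.reachable ⟨hij, h⟩

theorem nerveGraph_preconnected {ι Y : Type*} [TopologicalSpace Y] [PreconnectedSpace Y]
    {U : ι → Set Y} (hopen : ∀ i, IsOpen (U i)) (hcover : ∀ y, ∃ i, y ∈ U i)
    (hne : ∀ i, (U i).Nonempty) : (nerveGraph U).Preconnected := by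
  intro i j
  by_contra hij
  let S := {k | (nerveGraph U).Reachable i k}
  have hcover' : univ ⊆ (⋃ k ∈ S, U k) ∪ ⋃ k ∈ Sᶜ, U k := fun y _ => by
    obtain ⟨k, hk⟩ := hcover y
    by_cases hkS : k ∈ S
    exacts [Or.inl (mem_biUnion hkS hk), Or.inr (mem_biUnion hkS hk)]
  obtain ⟨y, -, hyS, hyT⟩ := isPreconnected_univ _ _
    (isOpen_biUnion fun k _ => hopen k) (isOpen_biUnion fun k _ => hopen k) hcover'
    (let ⟨y, hy⟩ := hne i; ⟨y, trivial, mem_biUnion (.refl i) hy⟩)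
    (let ⟨y, hy⟩ := hne j; ⟨y, trivial, mem_biUnion hij hy⟩)
  obtain ⟨k, hk, hyk⟩ := mem_iUnion₂.1 hyS
  obtain ⟨l, hl, hyl⟩ := mem_iUnion₂.1 hyT
  exact hl (hk.trans (nerveGraph_reachable_of_inter_nonempty ⟨y, hyk, hyl⟩))

theorem dist_lt_of_nerveGraph_ball_adj {ι Y : Type*} [PseudoMetricSpace Y] {c : ι → Y}
    {r : ℝ} {i j : ι} (h : (nerveGraph fun k => Metric.ball (c k) r).Adj i j) :
    dist (c i) (c j) < 2 * r := by
  obtain ⟨-, y, hi, hj⟩ := h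
  calc dist (c i) (c j) ≤ dist y (c i) + dist y (c j) := dist_triangle_left _ _ _
    _ < r + r := add_lt_add hi hj
    _ = 2 * r := (two_mul r).symm

theorem SimpleGraph.Reachable.exists_adj_chain {V : Type*} {G : SimpleGraph V} {i j : V}
    (h : G.Reachable i j) :
    ∃ (m : ℕ) (c : ℕ → V), c 0 = i ∧ c m = j ∧ ∀ k < m, G.Adj (c k) (c (k + 1)) :=
  let ⟨w⟩ := h
  ⟨w.length, w.getVert, w.getVert_zero, w.getVert_length, fun _ hk => w.adj_getVert_succ hk⟩

theorem nerve_connected_general {X Xt : Type*} [MetricSpace X] [MetricSpace Xt]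
    [CompactSpace X] [SimplyConnectedSpace Xt]
    (hX : IsLengthSpace X) (hXt : IsLengthSpace Xt)
    (ρ : Xt → X) (hρ : IsCoveringMap ρ) (hlift : IsLiftedMetric ρ)
    (p : X) (n : ℕ) (hn : 0 < n) (pt : Fin n → Xt)
    (hfib : range pt = ρ ⁻¹' {p})
    (ε : ℝ) (hε : 0 < ε)
    (U : Fin n → Set Xt)
    (hU : ∀ i, U i = Metric.ball (pt i) (Metric.diam (univ : Set X) + ε)) :
    (nerveGraph U).Connected ∧
      ∀ i j : Fin n, ∃ (m : ℕ) (c : ℕ → Fin n), c 0 = i ∧ c m = j ∧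
        ∀ k < m, dist (pt (c k)) (pt (c (k + 1))) <
          2 * (Metric.diam (univ : Set X) + ε) := by
  set r := Metric.diam (univ : Set X) + ε
  have hr : 0 < r := add_pos_of_nonneg_of_pos Metric.diam_nonneg hε
  obtain rfl : U = fun i => Metric.ball (pt i) r := funext hU
  have hcover : ∀ x : Xt, ∃ i, x ∈ Metric.ball (pt i) r := by
    intro x
    have hxp : edist (ρ x) p < ENNReal.ofReal r := by
      rw [edist_dist, ENNReal.ofReal_lt_ofReal_iff hr]
      exact (Metric.dist_le_diam_of_mem isCompact_univ.isBounded trivial trivial).trans_lt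
        (lt_add_of_pos_right _ hε)
    obtain ⟨x', hx'p, hxx'⟩ := hρ.exists_lift_edist_lt hlift hX hXt x hxp
    obtain ⟨i, rfl⟩ : x' ∈ range pt := hfib ▸ hx'p
    exact ⟨i, edist_lt_ofReal.1 hxx'⟩
  have hpre := nerveGraph_preconnected (fun i => Metric.isOpen_ball) hcover
    fun i => ⟨pt i, Metric.mem_ball_self hr⟩
  have : Nonempty (Fin n) := ⟨⟨0, hn⟩⟩
  refine ⟨⟨hpre⟩, fun i j => ?_⟩
  obtain ⟨m, c, hc0, hcm, hadj⟩ := (hpre i j).exists_adj_chain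
  exact ⟨m, c, hc0, hcm, fun k hk => dist_lt_of_nerveGraph_ball_adj (hadj k hk)⟩

/-- The nerve of the cover of the universal cover `X̃` by the balls `B(pᵢ, d+ε)`
centred at the points of a fiber is connected; moreover any two fiber points are
joined by a chain of fiber points with consecutive distances `< 2(d+ε)`. -/
theorem nerve_connected {X Xt : Type*} [MetricSpace X] [MetricSpace Xt]
    [CompactSpace X] [SimplyConnectedSpace Xt]
    (hX : IsLengthSpace X) (hXt : IsLengthSpace Xt)
    (hsl : IsSemiLocallySimplyConnected X)
    (ρ : Xt → X) (hρ : IsCoveringMap ρ) (hlift : IsLiftedMetric ρ)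
    (p : X) (n : ℕ) (hn : 0 < n) (pt : Fin n → Xt)
    (hpt : Function.Injective pt) (hfib : range pt = ρ ⁻¹' {p})
    (ε : ℝ) (hε : 0 < ε)
    (U : Fin n → Set Xt)
    (hU : ∀ i, U i = Metric.ball (pt i) (Metric.diam (univ : Set X) + ε)) :
    (nerveGraph U).Connected ∧
      ∀ i j : Fin n, ∃ (m : ℕ) (c : ℕ → Fin n), c 0 = i ∧ c m = j ∧
        ∀ k < m, dist (pt (c k)) (pt (c (k + 1))) <
          2 * (Metric.diam (univ : Set X) + ε) :=
  nerve_connected_general hX hXt ρ hρ hlift p n hn pt hfib ε hε U hU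
end

section
/- Let X̃ be a simply connected length space with an open cover {U_i}_{i=1}^n by metric balls U_i = B(p_i, r) such that there exists a partition of unity (ψ_1,…,ψ_n) subordinate to the cover with ψ_i(x) ≠ 0 iff x ∈ U_i. Then the nerve N of the cover is simply connected. -/
/-!
A closed walk `p` in the nerve is realised by a loop `γ` in `X` that runs, on the `m`-th unit
interval, inside `U (p.getVert m)`; consecutive sets share the point where the pieces are glued.
Since `X` is simply connected, `γ` contracts, and a Lebesgue number of the cover cuts the
contraction into a grid of small squares, each mapped into one set of the cover. Every row of
squares is a closed lazy walk in the nerve, and two adjacent rows share a point at each grid vertex,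
so they differ by triangle moves, one rung of the ladder between them at a time. The bottom row is
`p` with each vertex repeated, and the top row, lying in the constant end of the contraction, is
constant.
-/

open SimpleGraph

open Set

namespace SimpleGraph

variable {V : Type*} {G : SimpleGraph V}

abbrev IsLazyWalk (G : SimpleGraph V) (d : ℕ → V) : Prop :=
  ∀ i, d i = d (i + 1) ∨ G.Adj (d i) (d (i + 1))

namespace Walk

variable [DecidableEq V]

def step {a b : V} (h : a = b ∨ G.Adj a b) : G.Walk a b :=
  if hab : a = b then nil.copy rfl hab else cons (h.resolve_left hab) nil

@[simp]
lemma step_self {a : V} (h : a = a ∨ G.Adj a a) : step h = nil :=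
  dif_pos rfl

lemma step_of_adj {a b : V} (hab : G.Adj a b) (h : a = b ∨ G.Adj a b) : step h = cons hab nil :=
  dif_neg hab.ne

lemma copy_step {a b a' b' : V} (h : a = b ∨ G.Adj a b) (ha : a = a') (hb : b = b')
    (h' : a' = b' ∨ G.Adj a' b') : (step h).copy ha hb = step h' := by
  subst ha hb
  rfl

lemma append_step_of_eq {u a b : V} (p : G.Walk u a) (hab : a = b) (h : a = b ∨ G.Adj a b) :
    p.append (step h) = p.copy rfl hab := by
  subst hab
  simp

lemma step_append_of_eq {a b w : V} (hab : a = b) (h : a = b ∨ G.Adj a b) (q : G.Walk b w) :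
    (step h).append q = q.copy hab.symm rfl := by
  subst hab
  simp

lemma step_append_eq_copy_cons {a' x a b w : V} (h : G.Adj a b) (ha : a' = a) (hx : x = b)
    (hs : a' = x ∨ G.Adj a' x) (q : G.Walk x w) :
    (step hs).append q = (cons h (q.copy hx rfl)).copy ha.symm rfl := by
  subst ha hx
  rw [step_of_adj h]
  rfl

def ofLazy (d : ℕ → V) (hd : G.IsLazyWalk d) : (k : ℕ) → G.Walk (d 0) (d k)
  | 0 => nil
  | k + 1 => (ofLazy d hd k).append (step (hd k))

section

variable {d : ℕ → V} (hd : G.IsLazyWalk d)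

lemma ofLazy_succ_eq_step_append (k : ℕ) :
    ofLazy d hd (k + 1) =
      (step (hd 0)).append (ofLazy (fun i => d (i + 1)) (fun i => hd (i + 1)) k) := by
  induction k with
  | zero => simp [ofLazy]
  | succ k ih =>
    rw [ofLazy, ih, ← append_assoc]
    rfl

lemma ofLazy_copy_eq_nil {v : V} (h : ∀ i, d i = v) (k : ℕ) :
    (ofLazy d hd k).copy (h 0) (h k) = nil := by
  obtain rfl : d = fun _ => v := funext h
  induction k with
  | zero => rfl
  | succ k ih => simpa [ofLazy] using ih

lemma ofLazy_copy_comp {φ : ℕ → ℕ} (hφ0 : φ 0 = 0)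
    (hφ : ∀ i, φ (i + 1) = φ i ∨ φ (i + 1) = φ i + 1) (hdφ : G.IsLazyWalk (d ∘ φ)) (k : ℕ) :
    (ofLazy (d ∘ φ) hdφ k).copy (congrArg d hφ0) rfl = ofLazy d hd (φ k) := by
  suffices ∀ n (hn : φ k = n),
      (ofLazy (d ∘ φ) hdφ k).copy (congrArg d hφ0) (congrArg d hn) = ofLazy d hd n from
    this _ rfl
  induction k with
  | zero =>
    rintro n rfl
    have : ∀ m (hm : m = 0), (nil : G.Walk (d m) (d m)).copy (congrArg d hm) rfl =
        ofLazy d hd m := by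
      rintro _ rfl
      rfl
    exact this _ hφ0
  | succ k ih =>
    intro n hn
    rcases hφ k with h | h
    · rw [ofLazy, append_step_of_eq _ (congrArg d h.symm), copy_copy]
      exact ih n (h.symm.trans hn)
    · obtain rfl : n = φ k + 1 := hn ▸ h
      rw [ofLazy, ofLazy, ← ih _ rfl, ← append_copy_copy _ _ _ rfl, copy_step _ _ _ (hd _)]

end

lemma ofLazy_copy_eq_of_getVert {u w : V} (p : G.Walk u w) {d : ℕ → V} (hd : G.IsLazyWalk d)
    (hdp : ∀ i, d i = p.getVert i) {k : ℕ} (hk : p.length ≤ k) :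
    (ofLazy d hd k).copy ((hdp 0).trans p.getVert_zero)
      ((hdp k).trans (p.getVert_of_length_le hk)) = p := by
  induction p generalizing d k with
  | nil => exact ofLazy_copy_eq_nil hd hdp k
  | @cons a b c h q ih =>
    obtain ⟨k, rfl⟩ : ∃ k', k = k' + 1 := ⟨k - 1, by simp at hk; omega⟩
    rw [ofLazy_succ_eq_step_append,
      step_append_eq_copy_cons h (hdp 0) ((hdp (0 + 1)).trans q.getVert_zero), copy_copy,
      copy_cons]
    congr 1
    rw [copy_copy]
    exact ih (fun i => hd (i + 1)) (fun i => hdp (i + 1)) (by simpa using hk)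

lemma ofLazy_copy_getVert_comp {u w : V} (p : G.Walk u w) {φ : ℕ → ℕ} (hφ0 : φ 0 = 0)
    (hφ : ∀ i, φ (i + 1) = φ i ∨ φ (i + 1) = φ i + 1) (hdφ : G.IsLazyWalk (p.getVert ∘ φ))
    {k : ℕ} (hk : p.length ≤ φ k) :
    (ofLazy (p.getVert ∘ φ) hdφ k).copy ((congrArg p.getVert hφ0).trans p.getVert_zero)
      (p.getVert_of_length_le hk) = p := by
  have hd : G.IsLazyWalk p.getVert := fun i => by
    rcases lt_or_ge i p.length with hi | hi
    · exact Or.inr (p.adj_getVert_succ hi)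
    · exact Or.inl ((p.getVert_of_length_le hi).trans (p.getVert_of_length_le (by omega)).symm)
  rw [← copy_copy _ (congrArg p.getVert hφ0) rfl, ofLazy_copy_comp hd hφ0 hφ]
  exact ofLazy_copy_eq_of_getVert p hd (fun _ => rfl) hk

end Walk

end SimpleGraph

section Subdivision

variable {X ι : Type*}

/-- The cells of mesh `1 / N` are indexed so that `cell N 0 = [-1/N, 0]` lies before the origin;
index `0` of a chain is thereby free to carry the base vertex of a loop. -/
def cell (N i : ℕ) : Set ℝ :=
  Icc (((i : ℝ) - 1) / N) (i / N)

lemma div_mem_cell (N i : ℕ) : (i : ℝ) / N ∈ cell N i :=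
  ⟨by gcongr; linarith, le_rfl⟩

lemma div_mem_cell_succ (N i : ℕ) : (i : ℝ) / N ∈ cell N (i + 1) :=
  ⟨le_of_eq (by push_cast; ring), by gcongr; exact_mod_cast i.le_succ⟩

lemma abs_sub_div_le_of_mem_cell {N i : ℕ} {t : ℝ} (ht : t ∈ cell N i) :
    |t - i / N| ≤ 1 / N := by
  obtain ⟨ht₁, ht₂⟩ := ht
  rw [sub_div] at ht₁
  rw [abs_sub_le_iff]
  constructor <;> linarith [one_div_nonneg.2 (N.cast_nonneg (α := ℝ))]

lemma cell_subset_cell {M N i j : ℕ} (hM : 0 < M) (hN : 0 < N) (hj : M * j ≤ i + M - 1)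
    (hi : i ≤ M * j) : cell (M * N) i ⊆ cell N j := by
  have hMN : (0 : ℝ) < M * N := by positivity
  have hj' : (M : ℝ) * j + 1 ≤ i + M := by exact_mod_cast (show M * j + 1 ≤ i + M by omega)
  have hi' : (i : ℝ) ≤ M * j := by exact_mod_cast hi
  rintro t ⟨ht₁, ht₂⟩
  push_cast at ht₁ ht₂
  constructor
  · calc ((j : ℝ) - 1) / N = (M * ((j : ℝ) - 1)) / (M * N) := by field_simp
      _ ≤ ((i : ℝ) - 1) / (M * N) := by gcongr; linarith
      _ ≤ t := ht₁
  · calc t ≤ (i : ℝ) / (M * N) := ht₂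
      _ ≤ (M * (j : ℝ)) / (M * N) := by gcongr
      _ = j / N := by field_simp

def MapsToChain (U : ι → Set X) (N : ℕ) (f : ℝ → X) (d : ℕ → ι) : Prop :=
  ∀ i, MapsTo f (cell N i) (U (d i))

variable {U : ι → Set X} {N : ℕ} {f : ℝ → X} {d : ℕ → ι}

lemma MapsToChain.mem (h : MapsToChain U N f d) (i : ℕ) :
    f (i / N) ∈ U (d i) ∧ f (i / N) ∈ U (d (i + 1)) :=
  ⟨h i (div_mem_cell N i), h (i + 1) (div_mem_cell_succ N i)⟩

lemma MapsToChain.comp_mul (h : MapsToChain U N f d) {K : ℕ} (hK : 0 < K) :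
    MapsToChain U (N * K) (fun t => f (K * t)) d := by
  intro i t ⟨ht₁, ht₂⟩
  have hK' : (0 : ℝ) < K := by exact_mod_cast hK
  push_cast at ht₁ ht₂
  refine h i ⟨?_, ?_⟩
  · calc ((i : ℝ) - 1) / N = K * (((i : ℝ) - 1) / (N * K)) := by field_simp
      _ ≤ K * t := by gcongr
  · calc K * t ≤ K * ((i : ℝ) / (N * K)) := by gcongr
      _ = i / N := by field_simp

lemma MapsToChain.refine (h : MapsToChain U N f d) (hN : 0 < N) {M : ℕ} (hM : 0 < M) :
    MapsToChain U (M * N) f (fun i => d ((i + M - 1) / M)) := by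
  intro i
  refine (h _).mono_left (cell_subset_cell hM hN ?_ ?_)
  · rw [mul_comm]
    exact Nat.div_mul_le_self _ _
  · have := Nat.lt_div_mul_add (a := i + M - 1) hM
    rw [mul_comm]
    omega

end Subdivision

namespace TwoComplex

variable {ι : Type*} {C : TwoComplex ι} {Y : Type*} {U : ι → Set Y}

def ContainsNerve (C : TwoComplex ι) (U : ι → Set Y) : Prop :=
  nerveGraph U ≤ C.graph ∧ {f : Finset ι | f.card = 3 ∧ (⋂ i ∈ f, U i).Nonempty} ⊆ C.faces

lemma ContainsNerve.adj_or_eq (hC : C.ContainsNerve U) {a b : ι} {y : Y} (ha : y ∈ U a)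
    (hb : y ∈ U b) : a = b ∨ C.graph.Adj a b :=
  or_iff_not_imp_left.2 fun hab => hC.1 ⟨hab, y, ha, hb⟩

lemma ContainsNerve.isLazyWalk (hC : C.ContainsNerve U) {N : ℕ} {f : ℝ → Y} {d : ℕ → ι}
    (h : MapsToChain U N f d) : C.graph.IsLazyWalk d :=
  fun i => hC.adj_or_eq (h.mem i).1 (h.mem i).2

variable [DecidableEq ι]

namespace Homotopic

lemma append_left {u a b : ι} (r : C.graph.Walk u a) {p q : C.graph.Walk a b}
    (h : C.Homotopic p q) : C.Homotopic (r.append p) (r.append q) := by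
  induction h with
  | refl => exact .refl _
  | symm _ ih => exact ih.symm
  | trans _ _ ih₁ ih₂ => exact ih₁.trans ih₂
  | backtrack =>
    simp only [Walk.append_assoc]
    exact .backtrack _ _ _
  | triangle hf hab hac hcb =>
    simp only [Walk.append_assoc]
    exact .triangle hf hab hac hcb _ _

lemma append_right {a b w : ι} {p q : C.graph.Walk a b} (h : C.Homotopic p q)
    (r : C.graph.Walk b w) : C.Homotopic (p.append r) (q.append r) := by
  induction h with
  | refl => exact .refl _
  | symm _ ih => exact (ih r).symm
  | trans _ _ ih₁ ih₂ => exact (ih₁ r).trans (ih₂ r)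
  | backtrack =>
    simp only [← Walk.append_assoc, Walk.cons_append]
    exact .backtrack _ _ _
  | triangle hf hab hac hcb =>
    simp only [← Walk.append_assoc, Walk.cons_append]
    exact .triangle hf hab hac hcb _ _

lemma copy {u w u' w' : ι} {p q : C.graph.Walk u w} (h : C.Homotopic p q) (hu : u = u')
    (hw : w = w') : C.Homotopic (p.copy hu hw) (q.copy hu hw) := by
  subst hu hw
  exact h

end Homotopic

instance {u w : ι} :
    Trans (@Homotopic ι _ C u w) (@Homotopic ι _ C u w) (@Homotopic ι _ C u w) :=
  ⟨.trans⟩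

namespace ContainsNerve

open Walk

lemma homotopic_step_triangle (hC : C.ContainsNerve U) {a b c : ι} {y : Y} (ha : y ∈ U a)
    (hb : y ∈ U b) (hc : y ∈ U c) :
    C.Homotopic (step (hC.adj_or_eq ha hb))
      ((step (hC.adj_or_eq ha hc)).append (step (hC.adj_or_eq hc hb))) := by
  obtain rfl | hac := eq_or_ne a c
  · rw [step_self, nil_append]
    exact .refl _
  obtain rfl | hcb := eq_or_ne c b
  · rw [step_self, append_nil]
    exact .refl _
  have hac' := hC.1 ⟨hac, y, ha, hc⟩
  have hcb' := hC.1 ⟨hcb, y, hc, hb⟩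
  rw [step_of_adj hac', step_of_adj hcb', cons_append, nil_append]
  obtain rfl | hab := eq_or_ne a b
  · rw [step_self]
    exact (Homotopic.backtrack nil hac' nil).symm
  have hab' := hC.1 ⟨hab, y, ha, hb⟩
  have hface : ({a, b, c} : Finset ι) ∈ C.faces := hC.2
    ⟨Finset.card_eq_three.2 ⟨a, b, c, hab, hac, hcb.symm, rfl⟩, y, by simp [ha, hb, hc]⟩
  rw [step_of_adj hab']
  exact .triangle hface hab' hac' hcb' nil nil

lemma homotopic_step_square (hC : C.ContainsNerve U) {a b a' b' : ι} {y : Y} (ha : y ∈ U a)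
    (hb : y ∈ U b) (ha' : y ∈ U a') (hb' : y ∈ U b') :
    C.Homotopic ((step (hC.adj_or_eq ha hb)).append (step (hC.adj_or_eq hb hb')))
      ((step (hC.adj_or_eq ha ha')).append (step (hC.adj_or_eq ha' hb'))) :=
  (hC.homotopic_step_triangle ha hb' hb).symm.trans (hC.homotopic_step_triangle ha hb' ha')

lemma homotopic_ladder (hC : C.ContainsNerve U) {d e : ℕ → ι} (hd : C.graph.IsLazyWalk d)
    (he : C.graph.IsLazyWalk e) {z : ℕ → Y}
    (hz : ∀ i, z i ∈ U (d i) ∧ z i ∈ U (d (i + 1)) ∧ z i ∈ U (e i) ∧ z i ∈ U (e (i + 1)))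
    (h₀ : d 0 = e 0 ∨ C.graph.Adj (d 0) (e 0)) {k : ℕ}
    (hk : d k = e k ∨ C.graph.Adj (d k) (e k)) :
    C.Homotopic ((ofLazy d hd k).append (step hk)) ((step h₀).append (ofLazy e he k)) := by
  induction k with
  | zero =>
    rw [ofLazy, ofLazy, nil_append, append_nil]
    exact .refl _
  | succ k ih =>
    obtain ⟨hdk, hdk', hek, hek'⟩ := hz k
    calc (ofLazy d hd (k + 1)).append (step hk)
        _ = (ofLazy d hd k).append ((step (hd k)).append (step hk)) := by
          rw [ofLazy, append_assoc]
        C.Homotopic _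
            ((ofLazy d hd k).append ((step (hC.adj_or_eq hdk hek)).append (step (he k)))) :=
          (hC.homotopic_step_square hdk hdk' hek hek').append_left _
        _ = ((ofLazy d hd k).append (step (hC.adj_or_eq hdk hek))).append (step (he k)) :=
          append_assoc _ _ _
        C.Homotopic _ (((step h₀).append (ofLazy e he k)).append (step (he k))) :=
          (ih _).append_right _
        _ = (step h₀).append (ofLazy e he (k + 1)) := by
          rw [ofLazy, append_assoc]

lemma homotopic_copy_ofLazy_of_mapsToChain (hC : C.ContainsNerve U) {d e : ℕ → ι}
    (hd : C.graph.IsLazyWalk d) (he : C.graph.IsLazyWalk e) {N : ℕ} {f : ℝ → Y}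
    (hfd : MapsToChain U N f d) (hfe : MapsToChain U N f e) {k : ℕ} {u w : ι} (hd0 : d 0 = u)
    (hdk : d k = w) (he0 : e 0 = u) (hek : e k = w) :
    C.Homotopic ((ofLazy d hd k).copy hd0 hdk) ((ofLazy e he k).copy he0 hek) := by
  subst hd0 hdk
  have h := hC.homotopic_ladder hd he (z := fun i => f (i / N))
    (fun i => ⟨(hfd.mem i).1, (hfd.mem i).2, (hfe.mem i).1, (hfe.mem i).2⟩) (.inl he0.symm)
    (.inl hek.symm)
  rw [append_step_of_eq _ hek.symm, step_append_of_eq he0.symm] at h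
  simpa only [copy_copy] using h.copy rfl hek

end ContainsNerve

end TwoComplex

lemma IsLengthSpace.joinedIn_center {X : Type*} [PseudoMetricSpace X] (hX : IsLengthSpace X)
    {p x : X} {r : ℝ} (hx : x ∈ Metric.ball p r) : JoinedIn (Metric.ball p r) x p := by
  have hr : 0 < r := dist_nonneg.trans_lt hx
  have hxp : edist x p < ENNReal.ofReal r := by
    rw [edist_dist]
    exact (ENNReal.ofReal_lt_ofReal_iff hr).2 hx
  rw [hX x p] at hxp
  obtain ⟨γ, hγ⟩ := iInf_lt_iff.1 hxp
  obtain ⟨⟨hcont, hγ₀, hγ₁⟩, hvar⟩ := iInf_lt_iff.1 hγ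
  refine ⟨⟨⟨fun t => γ t, hcont.domRestrict⟩, hγ₀, hγ₁⟩, fun t => ?_⟩
  have : edist (γ t) p < ENNReal.ofReal r :=
    hγ₁ ▸ (eVariationOn.edist_le γ t.2 (right_mem_Icc.2 zero_le_one)).trans_lt hvar
  rwa [edist_dist, ENNReal.ofReal_lt_ofReal_iff hr] at this

lemma IsLengthSpace.joinedIn_ball {X : Type*} [PseudoMetricSpace X] (hX : IsLengthSpace X)
    {p x y : X} {r : ℝ} (hx : x ∈ Metric.ball p r) (hy : y ∈ Metric.ball p r) :
    JoinedIn (Metric.ball p r) x y :=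
  (hX.joinedIn_center hx).trans (hX.joinedIn_center hy).symm

section PathConcat

variable {X : Type*} [TopologicalSpace X] {z : ℕ → X} (σ : ∀ m, Path (z m) (z (m + 1)))

noncomputable def pathConcat : ℕ → ℝ → X
  | 0, t => (σ 0).extend t
  | k + 1, t => if t ≤ k + 1 then pathConcat k t else (σ (k + 1)).extend (t - (k + 1))

lemma pathConcat_of_le_zero {t : ℝ} (ht : t ≤ 0) : ∀ k, pathConcat σ k t = z 0
  | 0 => (σ 0).extend_of_le_zero ht
  | k + 1 => by
    rw [pathConcat, if_pos (by linarith [k.cast_nonneg (α := ℝ)])]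
    exact pathConcat_of_le_zero ht k

lemma pathConcat_of_le {k : ℕ} {t : ℝ} (ht : k + 1 ≤ t) : pathConcat σ k t = z (k + 1) := by
  cases k with
  | zero => exact (σ 0).extend_of_one_le (by simpa using ht)
  | succ k =>
    push_cast at ht
    rw [pathConcat, if_neg (by linarith)]
    exact (σ (k + 1)).extend_of_one_le (by linarith)

lemma pathConcat_eq_extend {m k : ℕ} (hm : m ≤ k) {t : ℝ} (ht₁ : m ≤ t) (ht₂ : t ≤ m + 1) :
    pathConcat σ k t = (σ m).extend (t - m) := by
  induction k with
  | zero =>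
    obtain rfl : m = 0 := by omega
    simp [pathConcat]
  | succ k ih =>
    rcases Nat.lt_or_ge m (k + 1) with hmk | hmk
    · have : (m : ℝ) + 1 ≤ k + 1 := by exact_mod_cast hmk
      rw [pathConcat, if_pos (by linarith)]
      exact ih (by omega)
    obtain rfl : m = k + 1 := by omega
    push_cast at ht₁ ht₂ ⊢
    rw [pathConcat]
    split_ifs
    · rw [pathConcat_of_le σ (le_of_eq (by linarith)), show t - (k + 1) = 0 by linarith,
        Path.extend_zero]
    · rfl

lemma continuous_pathConcat : ∀ k, Continuous (pathConcat σ k)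
  | 0 => (σ 0).continuous_extend
  | k + 1 => by
    refine Continuous.if_le (continuous_pathConcat k) ((σ _).continuous_extend.comp
      (continuous_id.sub continuous_const)) continuous_id continuous_const fun t ht => ?_
    rw [ht, pathConcat_of_le σ le_rfl, sub_self, Path.extend_zero]

lemma mapsToChain_pathConcat {ι : Type*} {U : ι → Set X} {e : ℕ → ι} {k : ℕ}
    (hσ : ∀ m t, σ m t ∈ U (e (m + 1))) (h₀ : z 0 ∈ U (e 0))
    (hend : ∀ i, k + 1 < i → z (k + 1) ∈ U (e i)) : MapsToChain U 1 (pathConcat σ k) e := by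
  intro i t ht
  simp only [cell, Nat.cast_one, div_one, mem_Icc] at ht
  rcases Nat.lt_or_ge (k + 1) i with hi | hi
  · have : (k : ℝ) + 1 + 1 ≤ i := by exact_mod_cast hi
    rw [pathConcat_of_le σ (by linarith)]
    exact hend i hi
  cases i with
  | zero =>
    rw [pathConcat_of_le_zero σ (by simpa using ht.2)]
    exact h₀
  | succ m =>
    push_cast at ht
    rw [pathConcat_eq_extend σ (m := m) (by omega) (by linarith) (by linarith), Path.extend]
    exact hσ m _

end PathConcat

section Loop

variable {X ι : Type*} {U : ι → Set X}

lemma SimpleGraph.Walk.nonempty_inter_getVert {G : SimpleGraph ι} (hG : G ≤ nerveGraph U)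
    {u w : ι} (p : G.Walk u w) (hw : (U w).Nonempty) (m : ℕ) :
    (U (p.getVert m) ∩ U (p.getVert (m + 1))).Nonempty := by
  rcases Nat.lt_or_ge m p.length with hm | hm
  · exact (hG (p.adj_getVert_succ hm)).2
  · rw [p.getVert_of_length_le hm, p.getVert_of_length_le (by omega), inter_self]
    exact hw

variable [TopologicalSpace X]

lemma exists_loop_mapsToChain {G : SimpleGraph ι} (hG : G ≤ nerveGraph U)
    (hU : ∀ i, ∀ x ∈ U i, ∀ y ∈ U i, JoinedIn (U i) x y) {v : ι} (p : G.Walk v v) {x₀ : X}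
    (hx₀ : x₀ ∈ U v) :
    ∃ γ : ℝ → X, Continuous γ ∧ (∀ t ≤ 0, γ t = x₀) ∧ (∀ t : ℝ, p.length + 1 ≤ t → γ t = x₀) ∧
      MapsToChain U 1 γ (fun i => p.getVert (i - 1)) := by
  have hw := p.nonempty_inter_getVert hG ⟨x₀, hx₀⟩
  set k := p.length
  have hv : ∀ n, k ≤ n → x₀ ∈ U (p.getVert n) := fun n hn => by
    rw [p.getVert_of_length_le hn]
    exact hx₀
  let z : ℕ → X := fun m => if 0 < m ∧ m ≤ k then (hw (m - 1)).some else x₀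
  have hz : ∀ m, z m ∈ U (p.getVert m) ∧ z (m + 1) ∈ U (p.getVert m) := by
    intro m
    constructor
    · by_cases hm : 0 < m ∧ m ≤ k
      · obtain ⟨n, rfl⟩ : ∃ n, m = n + 1 := ⟨m - 1, by omega⟩
        simpa [z, hm] using (hw n).some_mem.2
      · simp only [z, if_neg hm]
        rcases Nat.eq_zero_or_pos m with rfl | hm'
        · simpa using hx₀
        · exact hv m (by omega)
    · by_cases hm : m + 1 ≤ k
      · simpa [z, hm] using (hw m).some_mem.1
      · simp only [z, hm, and_false, if_false]
        exact hv m (by omega)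
  let σ : ∀ m, Path (z m) (z (m + 1)) := fun m => (hU _ _ (hz m).1 _ (hz m).2).somePath
  refine ⟨pathConcat σ k, continuous_pathConcat σ k, fun t ht => ?_, fun t ht => ?_,
    mapsToChain_pathConcat σ (fun m t => JoinedIn.somePath_mem _ t) (hz 0).1 fun i hi => ?_⟩
  · rw [pathConcat_of_le_zero σ ht]
    simp [z]
  · rw [pathConcat_of_le σ ht]
    simp [z]
  · simpa [z] using hv (i - 1) (by omega)

end Loop

section Contraction

variable {X ι : Type*} [TopologicalSpace X]

lemma exists_path_extend_eq {γ : ℝ → X} (hγ : Continuous γ) {x₀ : X} {T : ℝ} (hT : 0 ≤ T)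
    (h₀ : ∀ t ≤ 0, γ t = x₀) (h₁ : ∀ t, T ≤ t → γ t = x₀) :
    ∃ Γ : Path x₀ x₀, ∀ t, Γ.extend t = γ (T * t) := by
  refine ⟨⟨⟨fun t => γ (T * t), by fun_prop⟩, by simpa using h₀ 0 le_rfl,
    by simpa using h₁ T le_rfl⟩, fun t => ?_⟩
  rcases le_total t 0 with ht | ht
  · rw [Path.extend_of_le_zero _ ht, h₀ _ (mul_nonpos_of_nonneg_of_nonpos hT ht)]
  rcases le_total 1 t with ht' | ht'
  · rw [Path.extend_of_one_le _ ht', h₁ _ (le_mul_of_one_le_right hT ht')]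
  · rw [Path.extend_apply _ ⟨ht, ht'⟩]
    rfl

lemma exists_lebesgue_projIcc {F : unitInterval × unitInterval → X} (hF : Continuous F)
    {U : ι → Set X} (hU : ∀ i, IsOpen (U i)) (hcov : ⋃ i, U i = univ) :
    ∃ δ > 0, ∀ a b : ℝ, ∃ i, ∀ s t : ℝ, |s - a| < δ → |t - b| < δ →
      F (projIcc 0 1 zero_le_one s, projIcc 0 1 zero_le_one t) ∈ U i := by
  obtain ⟨δ, hδ, hball⟩ := lebesgue_number_lemma_of_metric isCompact_univ
    (fun i => (hU i).preimage hF) (by simp [← preimage_iUnion, hcov])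
  refine ⟨δ, hδ, fun a b => ?_⟩
  obtain ⟨i, hi⟩ := hball (projIcc 0 1 zero_le_one a, projIcc 0 1 zero_le_one b) trivial
  refine ⟨i, fun s t hs ht => hi ?_⟩
  rw [Metric.mem_ball, Prod.dist_eq, max_lt_iff, Subtype.dist_eq, Subtype.dist_eq, Real.dist_eq,
    Real.dist_eq]
  exact ⟨(abs_projIcc_sub_projIcc zero_le_one).trans_lt hs,
    (abs_projIcc_sub_projIcc zero_le_one).trans_lt ht⟩

lemma Path.exists_nullhomotopy_lebesgue [SimplyConnectedSpace X] {U : ι → Set X}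
    (hU : ∀ i, IsOpen (U i)) (hcov : ⋃ i, U i = univ) {x₀ : X} (Γ : Path x₀ x₀) :
    ∃ H : ℝ × ℝ → X, (∀ t, H (0, t) = Γ.extend t) ∧
      (∀ s t, 1 ≤ s ∨ t ≤ 0 ∨ 1 ≤ t → H (s, t) = x₀) ∧
      ∃ δ > 0, ∀ a b : ℝ, ∃ i, ∀ s t : ℝ, |s - a| < δ → |t - b| < δ → H (s, t) ∈ U i := by
  obtain ⟨F⟩ := SimplyConnectedSpace.paths_homotopic Γ (Path.refl x₀)
  refine ⟨fun st => F (projIcc 0 1 zero_le_one st.1, projIcc 0 1 zero_le_one st.2),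
    fun t => ?_, ?_, exists_lebesgue_projIcc F.continuous hU hcov⟩
  · simp only [projIcc_left]
    exact F.apply_zero _
  · rintro s t (hs | ht | ht) <;> dsimp only
    · rw [projIcc_of_right_le _ hs]
      exact F.apply_one _
    · rw [projIcc_of_le_left _ ht]
      exact F.source _
    · rw [projIcc_of_right_le _ ht]
      exact F.target _

end Contraction

section Grid

variable {X ι : Type*} {U : ι → Set X}

lemma exists_choice_preferring {α β : Type*} {P : α → β → Prop} (h : ∀ a, ∃ b, P a b)
    (b₀ : β) : ∃ c : α → β, ∀ a, P a (c a) ∧ (P a b₀ → c a = b₀) := by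
  classical
  refine ⟨fun a => if P a b₀ then b₀ else (h a).choose, fun a => ?_⟩
  dsimp only
  split_ifs with h₀
  · exact ⟨h₀, fun _ => rfl⟩
  · exact ⟨(h a).choose_spec, fun h' => absurd h' h₀⟩

lemma exists_index_mapsTo_cell_prod {H : ℝ × ℝ → X} {δ : ℝ}
    (hleb : ∀ a b : ℝ, ∃ i, ∀ s t : ℝ, |s - a| < δ → |t - b| < δ → H (s, t) ∈ U i) {N : ℕ}
    (hNδ : 1 / (N : ℝ) < δ) (v : ι) :
    ∃ c : ℕ → ℕ → ι, ∀ i j, MapsTo H (cell N j ×ˢ cell N i) (U (c i j)) ∧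
      (MapsTo H (cell N j ×ˢ cell N i) (U v) → c i j = v) := by
  have hsq : ∀ ij : ℕ × ℕ, ∃ c, MapsTo H (cell N ij.2 ×ˢ cell N ij.1) (U c) := by
    rintro ⟨i, j⟩
    obtain ⟨c, hc⟩ := hleb (j / N) (i / N)
    exact ⟨c, fun st hst => hc st.1 st.2 ((abs_sub_div_le_of_mem_cell hst.1).trans_lt hNδ)
      ((abs_sub_div_le_of_mem_cell hst.2).trans_lt hNδ)⟩
  obtain ⟨c, hc⟩ := exists_choice_preferring hsq v
  exact ⟨fun i j => c (i, j), fun i j => hc (i, j)⟩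

open Walk in
lemma TwoComplex.ContainsNerve.homotopic_nil_of_grid [DecidableEq ι] {C : TwoComplex ι}
    (hC : C.ContainsNerve U) {H : ℝ × ℝ → X} {x₀ : X} {v : ι} (hx₀ : x₀ ∈ U v)
    (hH : ∀ s t, 1 ≤ s ∨ t ≤ 0 ∨ 1 ≤ t → H (s, t) = x₀) {δ : ℝ}
    (hleb : ∀ a b : ℝ, ∃ i, ∀ s t : ℝ, |s - a| < δ → |t - b| < δ → H (s, t) ∈ U i) {N : ℕ}
    (hN : 0 < N) (hNδ : 1 / (N : ℝ) < δ) {d : ℕ → ι} (hd : C.graph.IsLazyWalk d)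
    (hdH : MapsToChain U N (fun t => H (0, t)) d) (hd0 : d 0 = v) (hdN : d (N + 1) = v) :
    C.Homotopic ((ofLazy d hd (N + 1)).copy hd0 hdN) nil := by
  obtain ⟨c, hc⟩ := exists_index_mapsTo_cell_prod hleb hNδ v
  have hrow : ∀ j, ∀ s ∈ cell N j, MapsToChain U N (fun t => H (s, t)) (c · j) :=
    fun j s hs i t ht => (hc i j).1 ⟨hs, ht⟩
  -- Wherever `H` is constant, `c` picks `v`: so every row starts and ends at `v`,
  -- and the row above `s = 1` is constant.
  have hcv : ∀ i j, (∀ s ∈ cell N j, ∀ t ∈ cell N i, H (s, t) = x₀) → c i j = v :=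
    fun i j h => (hc i j).2 fun st hst => by rw [h st.1 hst.1 st.2 hst.2]; exact hx₀
  have hN' : (0 : ℝ) < N := by exact_mod_cast hN
  have hc0 : ∀ j, c 0 j = v := fun j => hcv 0 j fun s _ t ht =>
    hH s t (Or.inr (Or.inl (by simpa [cell] using ht.2)))
  have hcN : ∀ j, c (N + 1) j = v := fun j => hcv (N + 1) j fun s _ t ht =>
    hH s t (Or.inr (Or.inr (by simpa [cell, hN'.ne'] using ht.1)))
  have hctop : ∀ i, c i (N + 1) = v := fun i => hcv i (N + 1) fun s hs t _ =>
    hH s t (Or.inl (by simpa [cell, hN'.ne'] using hs.1))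
  have hrows : ∀ j, C.Homotopic ((ofLazy d hd (N + 1)).copy hd0 hdN)
      ((ofLazy (c · j) (hC.isLazyWalk (hrow j _ (div_mem_cell N j))) (N + 1)).copy
        (hc0 j) (hcN j)) := by
    intro j
    induction j with
    | zero =>
      exact hC.homotopic_copy_ofLazy_of_mapsToChain _ _ hdH
        (hrow 0 0 (by simpa using div_mem_cell N 0)) _ _ _ _
    | succ j ih =>
      exact ih.trans (hC.homotopic_copy_ofLazy_of_mapsToChain _ _ (hrow j _ (div_mem_cell N j))
        (hrow (j + 1) _ (div_mem_cell_succ N j)) _ _ _ _)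
  simpa only [ofLazy_copy_eq_nil _ hctop] using hrows (N + 1)

end Grid

lemma Nat.succ_div_eq_or (a M : ℕ) : (a + 1) / M = a / M ∨ (a + 1) / M = a / M + 1 := by
  rw [Nat.succ_div]
  split_ifs <;> simp

namespace TwoComplex

open Walk

variable {X ι : Type*} [TopologicalSpace X] [SimplyConnectedSpace X] {U : ι → Set X}
  [DecidableEq ι] {C : TwoComplex ι}

lemma ContainsNerve.homotopic_nil (hC : C.ContainsNerve U) (hG : C.graph ≤ nerveGraph U)
    (hUo : ∀ i, IsOpen (U i)) (hcov : ⋃ i, U i = univ)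
    (hUj : ∀ i, ∀ x ∈ U i, ∀ y ∈ U i, JoinedIn (U i) x y) {v : ι} {x₀ : X} (hx₀ : x₀ ∈ U v)
    (p : C.graph.Walk v v) : C.Homotopic p nil := by
  obtain ⟨γ, hγ, hγ₀, hγ₁, hγU⟩ := exists_loop_mapsToChain hG hUj p hx₀
  set K := p.length + 1
  have hK : 0 < K := p.length.succ_pos
  obtain ⟨Γ, hΓ⟩ := exists_path_extend_eq hγ K.cast_nonneg hγ₀ (by exact_mod_cast hγ₁)
  obtain ⟨H, hH₀, hH, δ, hδ, hleb⟩ := Γ.exists_nullhomotopy_lebesgue hUo hcov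
  obtain ⟨n, hn⟩ := exists_nat_one_div_lt hδ
  set M := n + 1
  have hM : 0 < M := n.succ_pos
  -- The grid has `M * K` columns, `M` for each edge of `p`; column `i` lies in piece
  -- `(i - 1) / M` of `γ`.
  have hdH : MapsToChain U (M * K) (fun t => H (0, t)) (p.getVert ∘ fun i => (i - 1) / M) := by
    have := (hγU.comp_mul hK).refine (by simpa using hK) hM
    simp only [hH₀, hΓ, one_mul] at this ⊢
    convert this using 2 with i
    rcases i with _ | i
    · simp [Nat.div_eq_of_lt (Nat.sub_lt hM one_pos)]
    · simp [Nat.add_div_right _ hM]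
  have hNδ : 1 / ((M * K : ℕ) : ℝ) < δ := by
    refine lt_of_le_of_lt (one_div_le_one_div_of_le (by positivity) ?_) hn
    exact_mod_cast Nat.le_mul_of_pos_right M hK
  have hφ : ∀ i, (i + 1 - 1) / M = (i - 1) / M ∨ (i + 1 - 1) / M = (i - 1) / M + 1 := by
    rintro (_ | i)
    · simp
    · simpa using Nat.succ_div_eq_or i M
  have hlen : p.length ≤ (M * K + 1 - 1) / M := by simp [Nat.mul_div_cancel_left _ hM, K]
  calc p = _ := (ofLazy_copy_getVert_comp p (φ := fun i => (i - 1) / M) (by simp) hφ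
        (hC.isLazyWalk hdH) hlen).symm
    C.Homotopic _ nil := hC.homotopic_nil_of_grid hx₀ hH hleb (by positivity) hNδ _ hdH _ _

theorem simplyConnected_of_nerve (hUo : ∀ i, IsOpen (U i)) (hcov : ⋃ i, U i = univ)
    (hUj : ∀ i, ∀ x ∈ U i, ∀ y ∈ U i, JoinedIn (U i) x y) (hG : C.graph = nerveGraph U)
    (hF : {f : Finset ι | f.card = 3 ∧ (⋂ i ∈ f, U i).Nonempty} ⊆ C.faces) :
    C.SimplyConnected := by
  intro v p
  cases p with
  | nil => exact .refl _
  | cons h q =>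
    obtain ⟨x₀, hx₀, -⟩ := (hG ▸ h : (nerveGraph U).Adj _ _).2
    exact ContainsNerve.homotopic_nil ⟨hG.ge, hF⟩ hG.le hUo hcov hUj hx₀ _

end TwoComplex

theorem nerve_simplyConnected_general {Xt : Type*} [MetricSpace Xt] [SimplyConnectedSpace Xt]
    (hXt : IsLengthSpace Xt) (n : ℕ) (pt : Fin n → Xt) (r : ℝ)
    (U : Fin n → Set Xt) (hU : ∀ i, U i = Metric.ball (pt i) r)
    (hcov : ⋃ i, U i = univ) :
    ∀ C : TwoComplex (Fin n), C.graph = nerveGraph U →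
      C.faces = {f : Finset (Fin n) | f.card = 3 ∧ (⋂ i ∈ f, U i).Nonempty} →
      C.SimplyConnected := by
  intro C hG hF
  refine TwoComplex.simplyConnected_of_nerve (fun i => ?_) hcov (fun i x hx y hy => ?_) hG hF.ge
  · rw [hU i]
    exact Metric.isOpen_ball
  · rw [hU i] at hx hy ⊢
    exact hXt.joinedIn_ball hx hy

/-- If a simply connected length space is covered by `n` metric balls admitting a
subordinate partition of unity (with `ψ i` nonzero exactly on `U i`), then the nerve
of the cover (as a 2-complex) is simply connected. -/
theorem nerve_simplyConnected {Xt : Type*} [MetricSpace Xt] [SimplyConnectedSpace Xt]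
    (hXt : IsLengthSpace Xt) (n : ℕ) (pt : Fin n → Xt) (r : ℝ) (hr : 0 < r)
    (U : Fin n → Set Xt) (hU : ∀ i, U i = Metric.ball (pt i) r)
    (hcov : ⋃ i, U i = univ)
    (ψ : Fin n → Xt → ℝ) (hcont : ∀ i, Continuous (ψ i))
    (hnonneg : ∀ i x, 0 ≤ ψ i x) (hsum : ∀ x, ∑ i, ψ i x = 1)
    (hsupp : ∀ i x, ψ i x ≠ 0 ↔ x ∈ U i) :
    ∀ C : TwoComplex (Fin n), C.graph = nerveGraph U →
      C.faces = {f : Finset (Fin n) | f.card = 3 ∧ (⋂ i ∈ f, U i).Nonempty} →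
      C.SimplyConnected :=
  nerve_simplyConnected_general hXt n pt r U hU hcov
end
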